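/- Let d, n be positive integers such that φ(m) > d for all m > n. If a d×d matrix M over ℚ is torsion, then M^(n! + d) = M^d. -/

import Mathlib

/-!
A torsion matrix satisfies `M ^ p * (M ^ r - 1) = 0` with `r > 0`, so its minimal polynomial
splits as a divisor of `X ^ p` times a divisor of `X ^ r - 1`, both of degree at most `d`.
The first factor then divides `X ^ d`. Over `ℚ` the second one is a product of distinct
irreducible cyclotomic polynomials `Φ m`; each has degree `φ m ≤ d`, hence `m ≤ n` and `m ∣ n !`,
so the second factor divides `X ^ n ! - 1`.
-/

open Polynomial
open scoped Nat

theorem Monoid.exists_pow_add_eq_pow_of_pow_eq {G : Type*} [Monoid G] {a : G} {p q : ℕ}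
    (hne : p ≠ q) (h : a ^ p = a ^ q) : ∃ p r : ℕ, 0 < r ∧ a ^ (r + p) = a ^ p := by
  rcases hne.lt_or_gt with hlt | hlt
  · exact ⟨p, q - p, by omega, by rw [Nat.sub_add_cancel hlt.le, h]⟩
  · exact ⟨q, p - q, by omega, by rw [Nat.sub_add_cancel hlt.le, h]⟩

theorem minpoly_dvd_X_pow_mul_X_pow_sub_one_iff {K A : Type*} [Field K] [Ring A] [Algebra K A]
    {a : A} {p r : ℕ} : minpoly K a ∣ X ^ p * (X ^ r - 1) ↔ a ^ (r + p) = a ^ p := by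
  rw [minpoly.dvd_iff, map_mul, map_sub, map_pow, map_pow, map_one, aeval_X, mul_sub, mul_one,
    ← pow_add, add_comm, sub_eq_zero]

theorem Matrix.natDegree_minpoly_le {ι K : Type*} [Fintype ι] [DecidableEq ι] [Field K]
    (M : Matrix ι ι K) : (minpoly K M).natDegree ≤ Fintype.card ι :=
  M.charpoly_natDegree_eq_dim ▸ natDegree_le_of_dvd M.minpoly_dvd_charpoly M.charpoly_monic.ne_zero

namespace Polynomial

theorem dvd_X_pow_natDegree_of_dvd_X_pow {K : Type*} [Field K] {b : K[X]} {p : ℕ}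
    (hb : b ∣ X ^ p) : b ∣ X ^ b.natDegree := by
  obtain ⟨i, -, hassoc⟩ := (dvd_prime_pow prime_X p).mp hb
  have hb0 : b ≠ 0 := ne_zero_of_dvd_ne_zero (pow_ne_zero p X_ne_zero) hb
  have hi : i ≤ b.natDegree := by
    simpa using natDegree_le_of_dvd hassoc.symm.dvd hb0
  exact hassoc.dvd.trans (pow_dvd_pow X hi)

theorem dvd_X_pow_sub_one_of_cyclotomic_dvd {c : ℚ[X]} {r k : ℕ} (hr : 0 < r) (hk : 0 < k)
    (hc : c ∣ X ^ r - 1) (hcyc : ∀ m, m ∣ r → cyclotomic m ℚ ∣ c → m ∣ k) : c ∣ X ^ k - 1 := by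
  have hcop : IsCoprime c (∏ m ∈ r.divisors with ¬ m ∣ k, cyclotomic m ℚ) := by
    refine IsCoprime.prod_right fun m hm => ?_
    rw [Finset.mem_filter, Nat.mem_divisors] at hm
    rw [isCoprime_comm, (cyclotomic.irreducible_rat (Nat.pos_of_dvd_of_pos hm.1.1 hr)).coprime_iff_not_dvd]
    exact fun hdvd => hm.2 (hcyc m hm.1.1 hdvd)
  have hsub : {m ∈ r.divisors | m ∣ k} ⊆ k.divisors := fun m hm => by
    rw [Finset.mem_filter] at hm
    exact Nat.mem_divisors.mpr ⟨hm.2, hk.ne'⟩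
  calc c ∣ ∏ m ∈ r.divisors with m ∣ k, cyclotomic m ℚ := by
        refine hcop.dvd_of_dvd_mul_right ?_
        rwa [Finset.prod_filter_mul_prod_filter_not, prod_cyclotomic_eq_X_pow_sub_one hr]
    _ ∣ ∏ m ∈ k.divisors, cyclotomic m ℚ := Finset.prod_dvd_prod_of_subset _ _ _ hsub
    _ = X ^ k - 1 := prod_cyclotomic_eq_X_pow_sub_one hk ℚ

theorem dvd_X_pow_mul_X_pow_factorial_sub_one {f : ℚ[X]} {p r d n : ℕ} (hr : 0 < r)
    (hf : f ∣ X ^ p * (X ^ r - 1)) (hdeg : f.natDegree ≤ d) (hphi : ∀ m, n < m → d < φ m) :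
    f ∣ X ^ d * (X ^ n.factorial - 1) := by
  obtain ⟨b, c, hb, hc, rfl⟩ := exists_dvd_and_dvd_of_dvd_mul hf
  have hbc0 : b * c ≠ 0 :=
    ne_zero_of_dvd_ne_zero (mul_ne_zero (pow_ne_zero p X_ne_zero) (by simpa using X_pow_sub_C_ne_zero hr (1 : ℚ))) hf
  have hbd : b.natDegree ≤ d := (natDegree_le_of_dvd (dvd_mul_right b c) hbc0).trans hdeg
  have hcd : c.natDegree ≤ d := (natDegree_le_of_dvd (dvd_mul_left c b) hbc0).trans hdeg
  refine mul_dvd_mul ((dvd_X_pow_natDegree_of_dvd_X_pow hb).trans (pow_dvd_pow X hbd)) ?_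
  refine dvd_X_pow_sub_one_of_cyclotomic_dvd hr (Nat.factorial_pos n) hc fun m hmr hmc => ?_
  have hm : 0 < m := Nat.pos_of_dvd_of_pos hmr hr
  have htot : φ m ≤ d := natDegree_cyclotomic m ℚ ▸
    (natDegree_le_of_dvd hmc (right_ne_zero_of_mul hbc0)).trans hcd
  exact Nat.dvd_factorial hm (not_lt.mp fun hnm => (hphi m hnm).not_ge htot)

end Polynomial

theorem torsion_pow_factorial_general (d n : ℕ)
    (hphi : ∀ m : ℕ, n < m → d < Nat.totient m)
    (M : Matrix (Fin d) (Fin d) ℚ)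
    (htor : ∃ p q : ℕ, p ≠ q ∧ M ^ p = M ^ q) :
    M ^ (Nat.factorial n + d) = M ^ d := by
  obtain ⟨p₀, q₀, hne, heq⟩ := htor
  obtain ⟨p, r, hr, hpr⟩ := Monoid.exists_pow_add_eq_pow_of_pow_eq hne heq
  have hdeg : (minpoly ℚ M).natDegree ≤ d := by simpa using M.natDegree_minpoly_le
  rw [← minpoly_dvd_X_pow_mul_X_pow_sub_one_iff (K := ℚ)] at hpr ⊢
  exact dvd_X_pow_mul_X_pow_factorial_sub_one hr hpr hdeg hphi

theorem torsion_pow_factorial (d n : ℕ) (hd : 0 < d) (hn : 0 < n)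
    (hphi : ∀ m : ℕ, n < m → d < Nat.totient m)
    (M : Matrix (Fin d) (Fin d) ℚ)
    (htor : ∃ p q : ℕ, p ≠ q ∧ M ^ p = M ^ q) :
    M ^ (Nat.factorial n + d) = M ^ d :=
  torsion_pow_factorial_general d n hphi M htor
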